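/- Let f:[0,1]\{c}→[0,1] be a contracting Lorenz map and I⊆[0,1] an open interval. Then at least one of the following holds: (i) there exists n≥0 such that fⁿ restricted to I is a homeomorphism onto its image and c∈fⁿ(I); (ii) I is a wandering interval; (iii) there is a periodic attractor Λ whose basin β(Λ)={x : ω_f(x)=Λ} meets I; (iv) f has a weak repeller. -/

import Mathlib

open Set Filter Topology Function MeasureTheory

noncomputable section

/-- ω-limit set of `x` under `f`: accumulation points of the forward orbit. -/
def omegaLim (f : ℝ → ℝ) (x : ℝ) : Set ℝ :=
  {y | ∃ φ : ℕ → ℕ, StrictMono φ ∧ Tendsto (fun n => f^[φ n] x) atTop (𝓝 y)}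

/-- Forward orbit of `x` under `f`. -/
def fwdOrbit (f : ℝ → ℝ) (x : ℝ) : Set ℝ := {y | ∃ n : ℕ, f^[n] x = y}

/-- `x` is a periodic point of `f`. -/
def IsPerPt (f : ℝ → ℝ) (x : ℝ) : Prop := ∃ n : ℕ, 0 < n ∧ f^[n] x = x

/-- Preimage of a point, with the Lorenz-map convention that the critical point `c`
is a preimage of each one-sided critical value. -/
def extPreim (f : ℝ → ℝ) (c y : ℝ) : Set ℝ :=
  f ⁻¹' {y} ∪ {z | z = c ∧ (Tendsto f (𝓝[<] c) (𝓝 y) ∨ Tendsto f (𝓝[>] c) (𝓝 y))}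

/-- Iterated preimages with the Lorenz-map convention. -/
def extPreimIter (f : ℝ → ℝ) (c : ℝ) : ℕ → ℝ → Set ℝ
  | 0, x => {x}
  | n + 1, x => {z | ∃ y ∈ extPreimIter f c n x, z ∈ extPreim f c y}

/-- α-limit set of `x` under `f` (with critical point `c`). -/
def alphaLim (f : ℝ → ℝ) (c x : ℝ) : Set ℝ :=
  {y | ∃ (φ : ℕ → ℕ) (z : ℕ → ℝ), StrictMono φ ∧
    (∀ j, z j ∈ extPreimIter f c (φ j) x) ∧ Tendsto z atTop (𝓝 y)}

/-- A periodic attractor: a finite set `Λ` such that `{x | ω_f(x) = Λ}` has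
nonempty interior. -/
def IsPeriodicAttractor (f : ℝ → ℝ) (Λ : Set ℝ) : Prop :=
  Λ.Finite ∧ (interior {x | omegaLim f x = Λ}).Nonempty

/-- A weak repeller: a non-hyperbolic periodic point not contained in any periodic
attractor. -/
def IsWeakRepeller (f : ℝ → ℝ) (p : ℝ) : Prop :=
  IsPerPt f p ∧ |deriv (f^[minimalPeriod f p]) p| = 1 ∧
  ∀ Λ : Set ℝ, IsPeriodicAttractor f Λ → p ∉ Λ

/-- A `C^k` Lorenz map on `[0,1]` with critical point `c`. -/
structure IsLorenzMap (k : ℕ) (f : ℝ → ℝ) (c : ℝ) : Prop where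
  c_pos : 0 < c
  c_lt_one : c < 1
  map_zero : f 0 = 0
  map_one : f 1 = 1
  mapsTo : MapsTo f (Icc (0:ℝ) 1 \ {c}) (Icc (0:ℝ) 1)
  smooth : ContDiffOn ℝ (k : ℕ∞) f (Icc (0:ℝ) 1 \ {c})
  deriv_pos : ∀ x ∈ Icc (0:ℝ) 1 \ {c}, 0 < deriv f x

/-- The Lorenz map `f` is contracting: `f' → 0` at the critical point. -/
def IsContractingAt (f : ℝ → ℝ) (c : ℝ) : Prop :=
  Tendsto (deriv f) (𝓝[≠] c) (𝓝 0)

/-- Non-flatness of a contracting Lorenz map at its critical point. -/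
def IsNonFlat (f : ℝ → ℝ) (c : ℝ) : Prop :=
  ∃ (α a b : ℝ) (φ₀ φ₁ : ℝ → ℝ), 1 < α ∧ a ∈ Icc (0:ℝ) 1 ∧ b ∈ Icc (0:ℝ) 1 ∧
    ContDiffOn ℝ 2 φ₀ (Icc 0 c) ∧ ContDiffOn ℝ 2 φ₁ (Icc c 1) ∧
    StrictMonoOn φ₀ (Icc 0 c) ∧ StrictMonoOn φ₁ (Icc c 1) ∧
    (∀ x ∈ Icc (0:ℝ) c, 0 < derivWithin φ₀ (Icc 0 c) x) ∧
    (∀ x ∈ Icc c (1:ℝ), 0 < derivWithin φ₁ (Icc c 1) x) ∧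
    BijOn φ₀ (Icc 0 c) (Icc 0 (a ^ (1/α))) ∧
    BijOn φ₁ (Icc c 1) (Icc 0 (b ^ (1/α))) ∧
    (∀ x ∈ Ico (0:ℝ) c, f x = a - φ₀ (c - x) ^ α) ∧
    (∀ x ∈ Ioc c (1:ℝ), f x = 1 - b + φ₁ x ^ α)

/-- Negative Schwarzian derivative on `[0,1] \ {c}`. -/
def HasNegSchwarzian (f : ℝ → ℝ) (c : ℝ) : Prop :=
  ∀ x ∈ Icc (0:ℝ) 1 \ {c}, deriv f x ≠ 0 →
    deriv (deriv (deriv f)) x / deriv f x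
      - (3 / 2) * (deriv (deriv f) x / deriv f x) ^ 2 < 0

/-- Basin of attraction of a set. -/
def basin (f : ℝ → ℝ) (A : Set ℝ) : Set ℝ := {x | omegaLim f x ⊆ A}

/-- `S` is residual in `T`: it contains the trace on `T` of a countable intersection
of open sets, each dense in `T`. -/
def ResidualIn (S T : Set ℝ) : Prop :=
  ∃ U : ℕ → Set ℝ, (∀ n, IsOpen (U n)) ∧ (∀ n, T ⊆ closure (U n ∩ T)) ∧
    (⋂ n, U n) ∩ T ⊆ S

/-- Milnor topological attractor. -/
def IsTopAttractor (f : ℝ → ℝ) (A : Set ℝ) : Prop :=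
  IsCompact A ∧
  (∃ V : Set ℝ, IsOpen V ∧ V.Nonempty ∧ ResidualIn (basin f A) V) ∧
  ∀ A' : Set ℝ, IsClosed A' → MapsTo f A' A' → A' ⊆ A → A' ≠ A →
    ∃ V : Set ℝ, IsOpen V ∧ V.Nonempty ∧ ResidualIn (basin f A \ basin f A') V

/-- Wandering interval. -/
def IsWanderingInterval (f : ℝ → ℝ) (I : Set ℝ) : Prop :=
  (∀ i j : ℕ, 0 < i → 0 < j → i ≠ j → f^[i] '' I ∩ f^[j] '' I = ∅) ∧
  ¬ ∃ p : ℝ, IsPerPt f p ∧ ∀ x ∈ I, omegaLim f x = fwdOrbit f p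

def HasWanderingInterval (f : ℝ → ℝ) : Prop :=
  ∃ a b : ℝ, a < b ∧ Ioo a b ⊆ Icc 0 1 ∧ IsWanderingInterval f (Ioo a b)

/-- Nice interval `(a,b) ∋ c`: the forward orbits of the endpoints avoid `(a,b)`. -/
def IsNiceInterval (f : ℝ → ℝ) (c a b : ℝ) : Prop :=
  a < c ∧ c < b ∧ (∀ n : ℕ, f^[n] a ∉ Ioo a b) ∧ ∀ n : ℕ, f^[n] b ∉ Ioo a b

/-- Renormalization interval `(a,b) ∋ c`. -/
def IsRenormInterval (f : ℝ → ℝ) (c a b : ℝ) : Prop :=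
  a < c ∧ c < b ∧ IsPerPt f a ∧ IsPerPt f b ∧
  f^[minimalPeriod f a] '' Ico a c ⊆ Icc a b ∧
  f^[minimalPeriod f b] '' Ioc c b ⊆ Icc a b ∧
  (∀ n : ℕ, f^[n] a ∉ Ioo a b) ∧ ∀ n : ℕ, f^[n] b ∉ Ioo a b

/-- Uniformly expanding set. -/
def IsUniformlyExpanding (f : ℝ → ℝ) (Λ : Set ℝ) : Prop :=
  ∃ C > (0:ℝ), ∃ l > (1:ℝ), ∀ x ∈ Λ, ∀ n : ℕ,
    (∀ k < n, f^[k] x ∈ Λ) → C * l ^ n ≤ |deriv (f^[n]) x|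

/-- The set of points of `[0,1]` whose forward orbit avoids `J`. -/
def phobicSet (f : ℝ → ℝ) (J : Set ℝ) : Set ℝ :=
  {x ∈ Icc (0:ℝ) 1 | ∀ n : ℕ, f^[n] x ∉ J}

/-- Topological transitivity on a subset. -/
def TransitiveOn (f : ℝ → ℝ) (Λ : Set ℝ) : Prop :=
  ∀ U V : Set ℝ, IsOpen U → IsOpen V → (U ∩ Λ).Nonempty → (V ∩ Λ).Nonempty →
    ∃ n : ℕ, (f^[n] '' (U ∩ Λ) ∩ V).Nonempty

/-- Cantor set: nonempty, compact, perfect and totally disconnected. -/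
def IsCantorSet (s : Set ℝ) : Prop :=
  s.Nonempty ∧ IsCompact s ∧ Perfect s ∧ IsTotallyDisconnected s

/-- Attracting periodic point: a one-sided neighbourhood lies in the exact basin of
its orbit. -/
def IsAttractingPeriodicPt (f : ℝ → ℝ) (p : ℝ) : Prop :=
  IsPerPt f p ∧ ∃ ε > (0:ℝ),
    Ioo p (p + ε) ⊆ {x | omegaLim f x = fwdOrbit f p} ∨
    Ioo (p - ε) p ⊆ {x | omegaLim f x = fwdOrbit f p}

/-- Non-wandering set of `f` as a map of `[0,1]`. -/
def nonWandering (f : ℝ → ℝ) : Set ℝ :=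
  {x | x ∈ Icc (0:ℝ) 1 ∧ ∀ U : Set ℝ, IsOpen U → x ∈ U →
    ∃ n : ℕ, 0 < n ∧ (f^[n] '' (U ∩ Icc (0:ℝ) 1) ∩ U).Nonempty}

/-- First return time to `J`. -/
def returnTime (f : ℝ → ℝ) (J : Set ℝ) (x : ℝ) : ℕ :=
  sInf {j : ℕ | 1 ≤ j ∧ f^[j] x ∈ J}

/-- Domain of the first return map to `J`. -/
def returnDomain (f : ℝ → ℝ) (J : Set ℝ) : Set ℝ :=
  {x ∈ J | ∃ j : ℕ, 1 ≤ j ∧ f^[j] x ∈ J}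

/-- Linked open intervals. -/
def AreLinked (a₀ b₀ a₁ b₁ : ℝ) : Prop :=
  (({a₀, b₀} : Set ℝ) ∩ Ioo a₁ b₁).Nonempty ∧
  (Ioo a₀ b₀ ∩ ({a₁, b₁} : Set ℝ)).Nonempty


/-!
If some image `f^[n] '' I` contains `c`, the first such `n` gives a homeomorphism onto its image:
up to then every iterate is continuous and increasing on `I`. Otherwise all iterates are, and if
`I` is not wandering, either `I` lies in the basin of a periodic orbit or two images
`J = f^[i] '' I` and `f^[m] '' J` overlap. Then `f^[m]` is increasing on the interval
`J ∪ f^[m] '' J`, so `f^[m]`-orbits of points of `J` are monotone. If `f^[m] w ≠ w`, every residue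
class of the orbit of every point between `w` and `f^[m] w` converges to the same limit, which
gives a periodic attractor. If `f^[m]` fixes `J` pointwise, each point of `J` has multiplier of
modulus one; since the periodic attractors are countably many finite sets (each is the ω-limit
set of a rational point), some point of `J` lies in none of them and is a weak repeller.
-/

theorem omegaLim_iterate (f : ℝ → ℝ) (x : ℝ) (i : ℕ) :
    omegaLim f (f^[i] x) = omegaLim f x := by
  ext L
  constructor
  · rintro ⟨φ, hφ, hT⟩
    refine ⟨fun n => φ n + i, fun n n' h => by simpa using hφ h, ?_⟩
    simpa only [iterate_add_apply] using hT
  · rintro ⟨φ, hφ, hT⟩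
    have hle : ∀ n, i ≤ φ (n + i) := fun n => (Nat.le_add_left i n).trans hφ.le_apply
    refine ⟨fun n => φ (n + i) - i, fun n n' h => ?_, ?_⟩
    · have := hφ (Nat.add_lt_add_right h i)
      have := hle n
      dsimp only
      omega
    · have key : ∀ n, f^[φ (n + i) - i] (f^[i] x) = f^[φ (n + i)] x := fun n => by
        rw [← iterate_add_apply, Nat.sub_add_cancel (hle n)]
      simpa only [key, comp_def] using hT.comp (tendsto_add_atTop_nat i)

theorem IsPerPt.finite_fwdOrbit {f : ℝ → ℝ} {p : ℝ} (hp : IsPerPt f p) :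
    (fwdOrbit f p).Finite := by
  obtain ⟨n, hn, hpn⟩ := hp
  refine ((finite_Iio (minimalPeriod f p)).image fun k => f^[k] p).subset ?_
  rintro _ ⟨k, rfl⟩
  exact ⟨k % minimalPeriod f p, Nat.mod_lt _ (IsPeriodicPt.minimalPeriod_pos hn hpn),
    iterate_mod_minimalPeriod_eq⟩

theorem omegaLim_eq_image_of_tendsto {f : ℝ → ℝ} {x : ℝ} {m : ℕ} (hm : 0 < m) {y : ℕ → ℝ}
    (hy : ∀ r < m, Tendsto (fun k => f^[m * k + r] x) atTop (𝓝 (y r))) :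
    omegaLim f x = y '' Iio m := by
  ext L
  constructor
  · rintro ⟨φ, hφ, hT⟩
    obtain ⟨r, hr⟩ : ∃ r : Fin m, ∃ᶠ n in atTop, φ n % m = r :=
      frequently_exists.1 (Frequently.of_forall fun n => ⟨⟨φ n % m, Nat.mod_lt _ hm⟩, rfl⟩)
    obtain ⟨ψ, hψ, hψr⟩ := extraction_of_frequently_atTop hr
    have hdiv : Tendsto (fun n => φ (ψ n) / m) atTop atTop :=
      (Nat.tendsto_div_const_atTop hm.ne').comp (hφ.comp hψ).tendsto_atTop
    have hsplit : ∀ n, m * (φ (ψ n) / m) + r = φ (ψ n) := fun n => by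
      rw [← hψr n, Nat.div_add_mod]
    have hr' : Tendsto (fun n => f^[φ (ψ n)] x) atTop (𝓝 (y r)) := by
      simpa only [hsplit, comp_def] using (hy r r.isLt).comp hdiv
    exact ⟨r, r.isLt, tendsto_nhds_unique hr' (hT.comp hψ.tendsto_atTop)⟩
  · rintro ⟨r, hr, rfl⟩
    exact ⟨fun k => m * k + r, fun k k' h => by simp only; gcongr, hy r hr⟩

/-- The intervals `F k '' [u, v]` are chained end to end, so the sequence `F k u` is monotone and
squeezes `F k w` for every `w ∈ [u, v]`. -/
theorem exists_tendsto_of_monotoneOn_uIcc {F : ℕ → ℝ → ℝ} {u v : ℝ}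
    (hF : ∀ k, MonotoneOn (F k) (uIcc u v)) (hshift : ∀ k, F k v = F (k + 1) u)
    (hbdd : Bornology.IsBounded (range fun k => F k u)) :
    ∃ L, ∀ w ∈ uIcc u v, Tendsto (fun k => F k w) atTop (𝓝 L) := by
  rcases le_total u v with huv | hvu
  · rw [uIcc_of_le huv] at hF ⊢
    have hmono : Monotone fun k => F k u := monotone_nat_of_le_succ fun k =>
      (hF k (left_mem_Icc.2 huv) (right_mem_Icc.2 huv) huv).trans_eq (hshift k)
    have hlim := tendsto_atTop_ciSup hmono hbdd.bddAbove
    exact ⟨_, fun w hw => tendsto_of_tendsto_of_tendsto_of_le_of_le hlim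
      (hlim.comp (tendsto_add_atTop_nat 1)) (fun k => hF k (left_mem_Icc.2 huv) hw hw.1)
      fun k => (hF k hw (right_mem_Icc.2 huv) hw.2).trans_eq (hshift k)⟩
  · rw [uIcc_of_ge hvu] at hF ⊢
    have hanti : Antitone fun k => F k u := antitone_nat_of_succ_le fun k =>
      (hshift k).symm.trans_le (hF k (left_mem_Icc.2 hvu) (right_mem_Icc.2 hvu) hvu)
    have hlim := tendsto_atTop_ciInf hanti hbdd.bddBelow
    exact ⟨_, fun w hw => tendsto_of_tendsto_of_tendsto_of_le_of_le
      (hlim.comp (tendsto_add_atTop_nat 1)) hlim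
      (fun k => (hshift k).symm.trans_le (hF k (left_mem_Icc.2 hvu) hw hw.1))
      fun k => hF k hw (right_mem_Icc.2 hvu) hw.2⟩

theorem countable_sUnion_setOf_isPeriodicAttractor (f : ℝ → ℝ) :
    (⋃₀ {Λ | IsPeriodicAttractor f Λ}).Countable := by
  have hsub : {Λ | IsPeriodicAttractor f Λ} ⊆ range fun ρ : ℚ => omegaLim f ρ := by
    rintro Λ ⟨-, hΛ⟩
    obtain ⟨_, hρ, ρ, rfl⟩ :=
      Rat.denseRange_cast.inter_open_nonempty _ isOpen_interior hΛ
    exact ⟨ρ, interior_subset (s := {x | omegaLim f x = Λ}) hρ⟩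
  exact ((countable_range _).mono hsub).sUnion fun Λ hΛ => hΛ.1.countable

theorem differentiableAt_iterate {f : ℝ → ℝ} {t : ℝ}
    (hf : ∀ n, DifferentiableAt ℝ f (f^[n] t)) (n : ℕ) : DifferentiableAt ℝ (f^[n]) t := by
  induction n with
  | zero => exact differentiableAt_id
  | succ n ih => rw [iterate_succ']; exact (hf n).comp t ih

/-- The multiplier of the minimal period is an `m / P`-th root of `(f^[m])' t = 1`. -/
theorem abs_deriv_iterate_minimalPeriod_eq_one {f : ℝ → ℝ} {t : ℝ} {m : ℕ} (hm : 0 < m)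
    (hfix : f^[m] =ᶠ[𝓝 t] id) (hf : ∀ n, DifferentiableAt ℝ f (f^[n] t)) :
    |deriv (f^[minimalPeriod f t]) t| = 1 := by
  have hper : IsPeriodicPt f m t := hfix.eq_of_nhds
  obtain ⟨s, hs⟩ := hper.minimalPeriod_dvd
  have hs0 : s ≠ 0 := by rintro rfl; omega
  set D := deriv (f^[minimalPeriod f t]) t
  have hD : HasDerivAt (f^[m]) (D ^ s) t := by
    rw [hs, iterate_mul]
    exact HasDerivAt.iterate t (differentiableAt_iterate hf _).hasDerivAt
      (isPeriodicPt_minimalPeriod f t) s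
  have hDs : D ^ s = 1 := by rw [← hD.deriv, hfix.deriv_eq, deriv_id]
  rw [← pow_eq_one_iff_of_nonneg (abs_nonneg D) hs0, ← abs_pow, hDs, abs_one]

namespace IsLorenzMap

variable {k : ℕ} {f : ℝ → ℝ} {c : ℝ}

theorem strictMonoOn (hL : IsLorenzMap k f c) {S : Set ℝ} (hS : S ⊆ Icc 0 1 \ {c})
    (hSc : IsPreconnected S) : StrictMonoOn f S :=
  strictMonoOn_of_deriv_pos (convex_iff_ordConnected.2 hSc.ordConnected)
    (hL.smooth.continuousOn.mono hS) fun x hx => hL.deriv_pos x (hS (interior_subset hx))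

theorem differentiableAt (hL : IsLorenzMap k f c) (hk : k ≠ 0) {x : ℝ} (hx : x ∈ Ioo 0 1)
    (hxc : x ≠ c) : DifferentiableAt ℝ f x :=
  (hL.smooth.differentiableOn (by exact_mod_cast hk)).differentiableAt <|
    mem_of_superset ((isOpen_Ioo.sdiff isClosed_singleton).mem_nhds ⟨hx, hxc⟩)
      (sdiff_subset_sdiff_left Ioo_subset_Icc_self)

theorem iterate_continuousOn_strictMonoOn (hL : IsLorenzMap k f c) {T : Set ℝ}
    (hT : T ⊆ Icc 0 1) (hTc : IsPreconnected T) {n : ℕ} (hcT : ∀ j < n, c ∉ f^[j] '' T) :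
    ContinuousOn (f^[n]) T ∧ StrictMonoOn (f^[n]) T ∧ f^[n] '' T ⊆ Icc 0 1 := by
  induction n with
  | zero => exact ⟨continuousOn_id, strictMonoOn_id, by simpa using hT⟩
  | succ n ih =>
    obtain ⟨hcont, hmono, hsub⟩ := ih fun j hj => hcT j (hj.trans n.lt_succ_self)
    have hS : f^[n] '' T ⊆ Icc 0 1 \ {c} := fun x hx =>
      ⟨hsub hx, fun hxc => hcT n n.lt_succ_self (mem_singleton_iff.1 hxc ▸ hx)⟩
    rw [iterate_succ', image_comp]
    exact ⟨(hL.smooth.continuousOn.mono hS).comp hcont (mapsTo_image _ _),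
      (hL.strictMonoOn hS (hTc.image _ hcont)).comp hmono (mapsTo_image _ _),
      (image_mono hS).trans hL.mapsTo.image_subset⟩

theorem isPeriodicAttractor_omegaLim (hL : IsLorenzMap k f c) {J : Set ℝ}
    (hJ : J ⊆ Icc 0 1) (hJc : IsPreconnected J) (hcJ : ∀ n, c ∉ f^[n] '' J) {m : ℕ}
    (hm : 0 < m) (hJm : (J ∩ f^[m] '' J).Nonempty) {w : ℝ} (hw : w ∈ J)
    (hmw : f^[m] w ≠ w) : IsPeriodicAttractor f (omegaLim f w) := by
  obtain ⟨hcont, -, hJm_sub⟩ := hL.iterate_continuousOn_strictMonoOn hJ hJc (n := m)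
    fun j _ => hcJ j
  set T := J ∪ f^[m] '' J
  have hT : T ⊆ Icc 0 1 := union_subset hJ hJm_sub
  have hTc : IsPreconnected T := hJc.union' hJm (hJc.image _ hcont)
  have hcT : ∀ n, c ∉ f^[n] '' T := fun n => by
    rw [image_union, ← image_comp, ← iterate_add]
    exact fun h => h.elim (hcJ n) (hcJ (n + m))
  have hiter := fun n => hL.iterate_continuousOn_strictMonoOn hT hTc (n := n) fun j _ => hcT j
  have hwT : uIcc w (f^[m] w) ⊆ T := hTc.ordConnected.uIcc_subset (subset_union_left hw)
    (subset_union_right (mem_image_of_mem _ hw))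
  have hlim : ∀ r, ∃ L, ∀ w' ∈ uIcc w (f^[m] w),
      Tendsto (fun k => f^[m * k + r] w') atTop (𝓝 L) := fun r =>
    exists_tendsto_of_monotoneOn_uIcc (fun k => ((hiter _).2.1.mono hwT).monotoneOn)
      (fun k => by rw [← iterate_add_apply]; congr 1; ring)
      ((Metric.isBounded_Icc (0 : ℝ) 1).subset <| range_subset_iff.2 fun k =>
        (hiter _).2.2 (mem_image_of_mem _ (hwT left_mem_uIcc)))
  choose y hy using hlim
  have hω : ∀ w' ∈ uIcc w (f^[m] w), omegaLim f w' = y '' Iio m := fun w' hw' =>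
    omegaLim_eq_image_of_tendsto hm fun r _ => hy r w' hw'
  refine ⟨hω w left_mem_uIcc ▸ (finite_Iio m).image y,
    (nonempty_Ioo.2 (inf_lt_sup.2 hmw.symm)).mono (interior_maximal (fun x hx => ?_) isOpen_Ioo)⟩
  exact (hω x (Ioo_subset_Icc_self hx)).trans (hω w left_mem_uIcc).symm

theorem exists_isWeakRepeller (hL : IsLorenzMap k f c) (hk : k ≠ 0) {J : Set ℝ}
    (hJ : J ⊆ Icc 0 1) (hJc : IsPreconnected J) (hcJ : ∀ n, c ∉ f^[n] '' J)
    (hJnt : J.Nontrivial) {m : ℕ} (hm : 0 < m) (hfix : EqOn (f^[m]) id J) :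
    ∃ p, IsWeakRepeller f p := by
  obtain ⟨p, hp, q, hq, hpq⟩ := hJnt.exists_lt
  have hpqJ : Icc p q ⊆ J := hJc.ordConnected.out hp hq
  obtain ⟨t, ht, htΛ⟩ : (Ioo p q \ ⋃₀ {Λ | IsPeriodicAttractor f Λ}).Nonempty :=
    sdiff_nonempty.2 fun h => (not_le.2 hpq) <|
      Cardinal.Real.Ioo_countable_iff.1 ((countable_sUnion_setOf_isPeriodicAttractor f).mono h)
  have htJ : t ∈ J := hpqJ (Ioo_subset_Icc_self ht)
  have hfixt : f^[m] =ᶠ[𝓝 t] id := eventually_of_mem (Ioo_mem_nhds ht.1 ht.2)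
    fun x hx => hfix (hpqJ (Ioo_subset_Icc_self hx))
  have horbit : ∀ n, f^[n] t ∈ Ioo 0 1 ∧ f^[n] t ≠ c := fun n => by
    obtain ⟨-, hmono, hsub⟩ := hL.iterate_continuousOn_strictMonoOn hJ hJc (n := n)
      fun j _ => hcJ j
    exact ⟨⟨(hsub (mem_image_of_mem _ hp)).1.trans_lt (hmono hp htJ ht.1),
      (hmono htJ hq ht.2).trans_le (hsub (mem_image_of_mem _ hq)).2⟩,
      fun h => hcJ n ⟨t, htJ, h⟩⟩
  exact ⟨t, ⟨m, hm, hfixt.eq_of_nhds⟩,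
    abs_deriv_iterate_minimalPeriod_eq_one hm hfixt fun n =>
      hL.differentiableAt hk (horbit n).1 (horbit n).2,
    fun Λ hΛ htΛ' => htΛ ⟨Λ, hΛ, htΛ'⟩⟩

theorem exists_isPeriodicAttractor_or_isWeakRepeller (hL : IsLorenzMap k f c) (hk : k ≠ 0)
    {T : Set ℝ} (hT : T ⊆ Icc 0 1) (hTc : IsPreconnected T) (hTnt : T.Nontrivial)
    (hcT : ∀ n, c ∉ f^[n] '' T) {i m : ℕ} (hm : 0 < m)
    (hne : (f^[i] '' T ∩ f^[m] '' (f^[i] '' T)).Nonempty) :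
    (∃ Λ, IsPeriodicAttractor f Λ ∧ ({x | omegaLim f x = Λ} ∩ T).Nonempty) ∨
      ∃ p, IsWeakRepeller f p := by
  obtain ⟨hcont, hmono, hsub⟩ := hL.iterate_continuousOn_strictMonoOn hT hTc (n := i)
    fun j _ => hcT j
  have hcJ : ∀ n, c ∉ f^[n] '' (f^[i] '' T) := fun n => by
    rw [← image_comp, ← iterate_add]
    exact hcT _
  by_cases hfix : EqOn (f^[m]) id (f^[i] '' T)
  · exact Or.inr <| hL.exists_isWeakRepeller hk hsub (hTc.image _ hcont) hcJ
      (hTnt.image_of_injOn hmono.injOn) hm hfix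
  · obtain ⟨_, ⟨u, hu, rfl⟩, hmu⟩ := not_forall₂.1 hfix
    exact Or.inl ⟨_, hL.isPeriodicAttractor_omegaLim hsub (hTc.image _ hcont) hcJ hm hne
      (mem_image_of_mem _ hu) hmu, u, (omegaLim_iterate f u i).symm, hu⟩

end IsLorenzMap

theorem lorenz_homterval_lemma_general (f : ℝ → ℝ) (c a b : ℝ)
    (hL : IsLorenzMap 2 f c)
    (hab : a < b) (hsub : Ioo a b ⊆ Icc (0:ℝ) 1) :
    (∃ n : ℕ, ContinuousOn (f^[n]) (Ioo a b) ∧ InjOn (f^[n]) (Ioo a b) ∧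
        c ∈ f^[n] '' Ioo a b) ∨
    IsWanderingInterval f (Ioo a b) ∨
    (∃ Λ : Set ℝ, IsPeriodicAttractor f Λ ∧
        ({x | omegaLim f x = Λ} ∩ Ioo a b).Nonempty) ∨
    (∃ p : ℝ, IsWeakRepeller f p) := by
  classical
  by_cases hcrit : ∃ n, c ∈ f^[n] '' Ioo a b
  · obtain ⟨hcont, hmono, -⟩ := hL.iterate_continuousOn_strictMonoOn hsub isPreconnected_Ioo
      fun j hj => Nat.find_min hcrit hj
    exact Or.inl ⟨Nat.find hcrit, hcont, hmono.injOn, Nat.find_spec hcrit⟩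
  push Not at hcrit
  by_cases hW : IsWanderingInterval f (Ioo a b)
  · exact Or.inr (Or.inl hW)
  refine Or.inr (Or.inr ?_)
  rcases not_and_or.1 hW with hoverlap | hperiodic
  · push Not at hoverlap
    obtain ⟨i, j, -, -, hij, hne⟩ := hoverlap
    obtain ⟨i, m, hm, hne⟩ : ∃ i m, 0 < m ∧
        (f^[i] '' Ioo a b ∩ f^[m] '' (f^[i] '' Ioo a b)).Nonempty := by
      rcases hij.lt_or_gt with h | h
      · refine ⟨i, j - i, by omega, ?_⟩
        rwa [← image_comp, ← iterate_add, Nat.sub_add_cancel h.le]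
      · refine ⟨j, i - j, by omega, ?_⟩
        rwa [← image_comp, ← iterate_add, Nat.sub_add_cancel h.le, inter_comm]
    exact hL.exists_isPeriodicAttractor_or_isWeakRepeller two_ne_zero hsub isPreconnected_Ioo
      (Ioo_infinite hab).nontrivial hcrit hm hne
  · obtain ⟨p, hp, hω⟩ := not_not.1 hperiodic
    exact Or.inl ⟨fwdOrbit f p, ⟨hp.finite_fwdOrbit,
      (nonempty_Ioo.2 hab).mono (interior_maximal hω isOpen_Ioo)⟩,
      (nonempty_Ioo.2 hab).mono fun x hx => ⟨hω x hx, hx⟩⟩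

/-- **Homterval lemma.** For any open interval `I ⊆ [0,1]`, either
some iterate of `f` is a homeomorphism on `I` whose image contains `c`, or `I` is a
wandering interval, or the exact basin of some periodic attractor meets `I`, or `f`
has a weak repeller. -/
theorem lorenz_homterval_lemma (f : ℝ → ℝ) (c a b : ℝ)
    (hL : IsLorenzMap 2 f c) (hC : IsContractingAt f c)
    (hab : a < b) (hsub : Ioo a b ⊆ Icc (0:ℝ) 1) :
    (∃ n : ℕ, ContinuousOn (f^[n]) (Ioo a b) ∧ InjOn (f^[n]) (Ioo a b) ∧
        c ∈ f^[n] '' Ioo a b) ∨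
    IsWanderingInterval f (Ioo a b) ∨
    (∃ Λ : Set ℝ, IsPeriodicAttractor f Λ ∧
        ({x | omegaLim f x = Λ} ∩ Ioo a b).Nonempty) ∨
    (∃ p : ℝ, IsWeakRepeller f p) :=
  lorenz_homterval_lemma_general f c a b hL hab hsub
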